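/- Let X_{n,k} be the total number of records with respect to a uniform random composition of n into k parts: conditionally on the composition (b_1,…,b_k), X_{n,k} is a sum of k independent random variables where the i-th has the distribution of the number of records in a uniform i.i.d. sample of size b_i (equivalently P[Z_m = j] = s(m,j)/m!). Then P[X_{n,k} = j] = s(n,j)·S(j,k)/L(n,k) for j ∈ {k,…,n}, i.e., X_{n,k} has the Lah distribution Lah(n,k). -/

import Mathlib

/-- Unsigned Stirling numbers of the first kind. -/
def stirling1 : ℕ → ℕ → ℕ
  | 0, 0 => 1
  | 0, _ + 1 => 0
  | _ + 1, 0 => 0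
  | n + 1, k + 1 => stirling1 n k + n * stirling1 n (k + 1)

/-- Stirling numbers of the second kind. -/
def stirling2 : ℕ → ℕ → ℕ
  | 0, 0 => 1
  | 0, _ + 1 => 0
  | _ + 1, 0 => 0
  | n + 1, k + 1 => stirling2 n k + (k + 1) * stirling2 n (k + 1)

open scoped BigOperators

/-- The compositions of `n` into `k` positive parts, encoded as functions `Fin k → Fin (n+1)`
with all parts positive and summing to `n`. -/
def compositions (n k : ℕ) : Finset (Fin k → Fin (n + 1)) :=
  Finset.univ.filter fun c => (∀ t, 1 ≤ (c t : ℕ)) ∧ (∑ t, (c t : ℕ)) = n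

/-- The Lah number `L(n,k) = (n!/k!)·C(n-1,k-1)`, as a rational number. -/
noncomputable def lahNumber (n k : ℕ) : ℚ :=
  (n.factorial : ℚ) / (k.factorial : ℚ) * ((n - 1).choose (k - 1) : ℚ)

/-- `P[X_{n,k} = j]`: averaging over the uniform random composition `(b_1,…,b_k)` of `n`
into `k` parts, the probability that independent record counts `Z_{b_1} + ⋯ + Z_{b_k}`
(with `P[Z_m = l] = s(m,l)/m!`) sum to `j`. -/
noncomputable def recordCountProb (n k j : ℕ) : ℚ :=
  (((n - 1).choose (k - 1) : ℚ))⁻¹ *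
    ∑ c ∈ compositions n k,
      ∑ g ∈ Finset.univ.filter fun g : Fin k → Fin (j + 1) => (∑ t, (g t : ℕ)) = j,
        ∏ i, (stirling1 (c i) (g i) : ℚ) / ((c i : ℕ).factorial : ℚ)

/-! With `u = -log (1 - t)`, the records of a sample of size `m` have generating function
`∑ s(m,l) xˡ tᵐ / m! = (1 - t)⁻ˣ = exp (x u)`. Summing over the compositions of `n` into `k`
parts therefore extracts the coefficient of `xʲ tⁿ` in `(exp (x u) - 1)ᵏ = k! ∑ S(j,k) (x u)ʲ / j!`,
and `uʲ / j! = ∑ s(n,j) tⁿ / n!`, so that coefficient is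
`k! S(j,k) s(n,j) / n! = C(n-1,k-1) s(n,j) S(j,k) / L(n,k)`. Coefficientwise this is an induction
on `k`, using `uᵖ/p! · u^q/q! = C(p+q,p) u^(p+q)/(p+q)!` and `∑ᵢ C(j,i) S(i,k) = S(j+1,k+1)`. -/

open Finset

theorem stirling1_eq_stirlingFirst : stirling1 = Nat.stirlingFirst := by
  funext n k
  induction n generalizing k with
  | zero => cases k <;> rfl
  | succ n ih =>
    cases k with
    | zero => rfl
    | succ k => rw [stirling1, Nat.stirlingFirst_succ_succ, ih, ih, add_comm]

theorem stirling2_eq_stirlingSecond : stirling2 = Nat.stirlingSecond := by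
  funext n k
  induction n generalizing k with
  | zero => cases k <;> rfl
  | succ n ih =>
    cases k with
    | zero => rfl
    | succ k => rw [stirling2, Nat.stirlingSecond_succ_succ, ih, ih, add_comm]

namespace Nat

theorem sum_antidiagonal_choose_mul_stirlingFirst_mul_stirlingFirst (n p q : ℕ) :
    ∑ ij ∈ antidiagonal n, n.choose ij.1 * (stirlingFirst ij.1 p * stirlingFirst ij.2 q) =
      (p + q).choose p * stirlingFirst n (p + q) := by
  induction n generalizing p q with
  | zero => cases p <;> cases q <;> simp [stirlingFirst_eq_zero_of_lt]
  | succ n ih =>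
    rcases p with _ | p
    · rw [Finset.Nat.sum_antidiagonal_succ]
      simp
    rcases q with _ | q
    · rw [Finset.Nat.sum_antidiagonal_succ']
      simp
    have hsplit := sum_antidiagonal_choose_succ_mul (R := ℕ)
      (fun i j ↦ stirlingFirst i (p + 1) * stirlingFirst j (q + 1)) n
    have hcomb : ∑ ij ∈ antidiagonal n, n.choose ij.1 *
          (stirlingFirst ij.1 (p + 1) * stirlingFirst (ij.2 + 1) (q + 1)) +
        ∑ ij ∈ antidiagonal n, n.choose ij.2 *
          (stirlingFirst (ij.1 + 1) (p + 1) * stirlingFirst ij.2 (q + 1)) =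
        ∑ ij ∈ antidiagonal n, n.choose ij.1 * (stirlingFirst ij.1 (p + 1) * stirlingFirst ij.2 q) +
        ∑ ij ∈ antidiagonal n, n.choose ij.1 * (stirlingFirst ij.1 p * stirlingFirst ij.2 (q + 1)) +
        n * ∑ ij ∈ antidiagonal n,
          n.choose ij.1 * (stirlingFirst ij.1 (p + 1) * stirlingFirst ij.2 (q + 1)) := by
      rw [mul_sum, ← sum_add_distrib, ← sum_add_distrib, ← sum_add_distrib]
      refine sum_congr rfl fun ij hij ↦ ?_
      rw [← HasAntidiagonal.mem_antidiagonal.mp hij, choose_symm_add, stirlingFirst_succ_succ,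
        stirlingFirst_succ_succ]
      ring
    simp only [Nat.cast_id] at hsplit
    rw [hsplit, hcomb, ih, ih, ih, show p + 1 + (q + 1) = p + q + 1 + 1 by ring,
      stirlingFirst_succ_succ, choose_succ_succ, add_right_comm p 1 q, ← add_assoc]
    ring

theorem sum_antidiagonal_choose_mul_stirlingSecond (n k : ℕ) :
    ∑ ij ∈ antidiagonal n, n.choose ij.1 * stirlingSecond ij.2 k =
      stirlingSecond (n + 1) (k + 1) := by
  induction n generalizing k with
  | zero => simp [stirlingSecond_succ_succ]
  | succ n ih =>
    have hsplit := sum_antidiagonal_choose_succ_mul (R := ℕ) (fun _ j ↦ stirlingSecond j k) n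
    have hsymm : ∑ ij ∈ antidiagonal n, n.choose ij.2 * stirlingSecond ij.2 k =
        ∑ ij ∈ antidiagonal n, n.choose ij.1 * stirlingSecond ij.2 k := by
      refine sum_congr rfl fun ij hij ↦ ?_
      rw [← HasAntidiagonal.mem_antidiagonal.mp hij, choose_symm_add]
    simp only [Nat.cast_id] at hsplit
    rw [hsplit, hsymm, ih]
    rcases k with _ | k
    · simp [stirlingSecond_one_right]
    · have hshift : ∑ ij ∈ antidiagonal n, n.choose ij.1 * stirlingSecond (ij.2 + 1) (k + 1) =
          (k + 1) * stirlingSecond (n + 1) (k + 2) + stirlingSecond (n + 1) (k + 1) := by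
        simp only [stirlingSecond_succ_succ _ k, mul_add, sum_add_distrib, mul_left_comm _ (k + 1),
          ← mul_sum, ih]
      rw [hshift, stirlingSecond_succ_succ (n + 1) (k + 1)]
      ring

end Nat

namespace Finset.Nat

theorem sum_antidiagonalTuple_succ {M : Type*} [AddCommMonoid M] (k n : ℕ)
    (f : (Fin (k + 1) → ℕ) → M) :
    ∑ x ∈ antidiagonalTuple (k + 1) n, f x =
      ∑ p ∈ antidiagonal n, ∑ x ∈ antidiagonalTuple k p.2, f (Fin.cons p.1 x) := by
  rw [sum_sigma']
  refine sum_nbij' (fun x ↦ ⟨(x 0, ∑ i, Fin.tail x i), Fin.tail x⟩)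
    (fun q ↦ Fin.cons q.1.1 q.2) ?_ ?_ ?_ ?_ ?_ <;>
    simp +contextual [mem_antidiagonalTuple, Fin.sum_univ_succ, Fin.tail]

theorem sum_filter_fin_tuple_eq_sum_antidiagonalTuple {M : Type*} [AddCommMonoid M]
    (k j : ℕ) (F : (Fin k → ℕ) → M) :
    ∑ g ∈ univ.filter fun g : Fin k → Fin (j + 1) => ∑ t, (g t : ℕ) = j, F (fun i ↦ g i) =
      ∑ x ∈ antidiagonalTuple k j, F x := by
  have hle {x : Fin k → ℕ} (hx : ∑ t, x t = j) (i : Fin k) : x i ≤ j :=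
    hx ▸ single_le_sum (fun _ _ ↦ Nat.zero_le _) (mem_univ i)
  refine sum_nbij' (fun g i ↦ g i) (fun x i ↦ ⟨min (x i) j, by omega⟩) ?_ ?_ ?_ ?_ ?_
  · simp [mem_antidiagonalTuple]
  · intro x hx
    rw [mem_antidiagonalTuple] at hx
    simp [hle hx, hx]
  · intro g _
    ext i
    simp [Nat.le_of_lt_succ (g i).isLt]
  · intro x hx
    rw [mem_antidiagonalTuple] at hx
    ext i
    simp [hle hx]
  · simp

theorem sum_antidiagonal_ite_fst_eq_zero {M : Type*} [AddCommMonoid M] (n : ℕ)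
    (f : ℕ × ℕ → M) : ∑ p ∈ antidiagonal n, (if p.1 = 0 then f p else 0) = f (0, n) := by
  rw [← sum_filter, HasAntidiagonal.filter_fst_eq_antidiagonal n 0]
  simp

end Finset.Nat

/-- The `(n, j)` coefficient of the `k`-th power of `∑ f m l xᵐ yˡ`. -/
def convPow {R : Type*} [CommSemiring R] (f : ℕ → ℕ → R) (k n j : ℕ) : R :=
  ∑ c ∈ Nat.antidiagonalTuple k n, ∑ g ∈ Nat.antidiagonalTuple k j, ∏ i, f (c i) (g i)

section convPow

variable {R : Type*} [CommSemiring R] (f : ℕ → ℕ → R)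

theorem convPow_zero (n j : ℕ) : convPow f 0 n j = if n = 0 ∧ j = 0 then 1 else 0 := by
  rcases n with _ | n <;> rcases j with _ | j <;> simp [convPow]

theorem convPow_succ (k n j : ℕ) :
    convPow f (k + 1) n j =
      ∑ p ∈ antidiagonal n, ∑ q ∈ antidiagonal j, f p.1 q.1 * convPow f k p.2 q.2 := by
  simp only [convPow, Finset.Nat.sum_antidiagonalTuple_succ, Fin.prod_univ_succ, Fin.cons_zero,
    Fin.cons_succ, mul_sum]
  exact sum_congr rfl fun p _ ↦ sum_comm

end convPow

open Nat

def recordProb (m l : ℕ) : ℚ := stirlingFirst m l / m !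

/-- Vanishing at `m = 0` makes a sum over all tuples a sum over compositions. -/
def positiveRecordProb (m l : ℕ) : ℚ := if 1 ≤ m then recordProb m l else 0

theorem sum_antidiagonal_recordProb_mul_recordProb (n l l' : ℕ) :
    ∑ p ∈ antidiagonal n, recordProb p.1 l * recordProb p.2 l' =
      (l + l').choose l * recordProb n (l + l') := by
  have h := congrArg (fun x : ℕ ↦ (x : ℚ) / n !)
    (sum_antidiagonal_choose_mul_stirlingFirst_mul_stirlingFirst n l l')
  simp only [cast_sum, cast_mul, sum_div] at h
  rw [recordProb, ← mul_div_assoc, ← h]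
  refine sum_congr rfl fun p hp ↦ ?_
  obtain ⟨i, j⟩ := p
  rw [← HasAntidiagonal.mem_antidiagonal.mp hp, recordProb, recordProb]
  have hfact := congrArg (Nat.cast : ℕ → ℚ) (add_choose_mul_factorial_mul_factorial i j)
  rw [← choose_symm_add] at hfact
  push_cast at hfact
  have hchoose : ((i + j).choose i : ℚ) ≠ 0 := mod_cast (choose_pos (le_add_right i j)).ne'
  rw [← hfact]
  field_simp

theorem sum_antidiagonal_positiveRecordProb_mul_recordProb (n l l' : ℕ) :
    ∑ p ∈ antidiagonal n, positiveRecordProb p.1 l * recordProb p.2 l' =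
      ((l + l').choose l - if l = 0 then 1 else 0) * recordProb n (l + l') := by
  have hsplit : ∀ p : ℕ × ℕ, positiveRecordProb p.1 l * recordProb p.2 l' =
      recordProb p.1 l * recordProb p.2 l' -
        if p.1 = 0 then recordProb p.1 l * recordProb p.2 l' else 0 := by
    rintro ⟨_ | m, m'⟩ <;> simp [positiveRecordProb]
  simp only [hsplit, sum_sub_distrib, Finset.Nat.sum_antidiagonal_ite_fst_eq_zero,
    sum_antidiagonal_recordProb_mul_recordProb]
  rcases l with _ | l <;> simp [recordProb]

theorem convPow_positiveRecordProb (k n j : ℕ) :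
    convPow positiveRecordProb k n j = k ! * stirlingSecond j k * recordProb n j := by
  induction k generalizing n j with
  | zero =>
    rw [convPow_zero]
    rcases n with _ | n <;> rcases j with _ | j <;> simp [recordProb]
  | succ k ih =>
    have hS := congrArg (Nat.cast : ℕ → ℚ) (sum_antidiagonal_choose_mul_stirlingSecond j k)
    push_cast [stirlingSecond_succ_succ] at hS
    calc convPow positiveRecordProb (k + 1) n j
        = ∑ q ∈ antidiagonal j, k ! * stirlingSecond q.2 k *
            ∑ p ∈ antidiagonal n, positiveRecordProb p.1 q.1 * recordProb p.2 q.2 := by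
          simp only [convPow_succ, ih, mul_sum]
          rw [sum_comm]
          refine sum_congr rfl fun q _ ↦ sum_congr rfl fun p _ ↦ ?_
          ring
      _ = ∑ q ∈ antidiagonal j, k ! * recordProb n j *
            (j.choose q.1 * stirlingSecond q.2 k -
              if q.1 = 0 then (stirlingSecond q.2 k : ℚ) else 0) := by
          refine sum_congr rfl fun q hq ↦ ?_
          rw [sum_antidiagonal_positiveRecordProb_mul_recordProb,
            HasAntidiagonal.mem_antidiagonal.mp hq]
          split_ifs <;> ring
      _ = (k + 1)! * stirlingSecond j (k + 1) * recordProb n j := by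
          rw [← mul_sum, sum_sub_distrib, Finset.Nat.sum_antidiagonal_ite_fst_eq_zero, hS,
            factorial_succ]
          push_cast
          ring

theorem recordCountProb_eq_convPow (n k j : ℕ) :
    recordCountProb n k j = ((n - 1).choose (k - 1) : ℚ)⁻¹ * convPow positiveRecordProb k n j := by
  have hcomp : compositions n k =
      (univ.filter fun c : Fin k → Fin (n + 1) => ∑ t, (c t : ℕ) = n).filter
        fun c => ∀ t, 1 ≤ (c t : ℕ) := by
    ext c
    simp [compositions, and_comm]
  rw [recordCountProb, convPow, hcomp, sum_filter,
    ← Finset.Nat.sum_filter_fin_tuple_eq_sum_antidiagonalTuple k n]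
  congr 1
  refine sum_congr rfl fun c _ ↦ ?_
  rw [← Finset.Nat.sum_filter_fin_tuple_eq_sum_antidiagonalTuple k j, ite_sum_zero]
  refine sum_congr rfl fun g _ ↦ ?_
  simp only [positiveRecordProb, Fintype.prod_ite_zero, recordProb, stirling1_eq_stirlingFirst]
  congr

theorem stmt_15_general (n k j : ℕ) :
    recordCountProb n k j = (stirling1 n j : ℚ) * (stirling2 j k : ℚ) / lahNumber n k := by
  rw [recordCountProb_eq_convPow, convPow_positiveRecordProb, lahNumber, recordProb,
    stirling1_eq_stirlingFirst, stirling2_eq_stirlingSecond]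
  simp only [div_eq_mul_inv, mul_inv, inv_inv]
  ring

theorem stmt_15 (n k j : ℕ) (hk : 1 ≤ k) (hkn : k ≤ n) (hkj : k ≤ j) (hjn : j ≤ n) :
    recordCountProb n k j = (stirling1 n j : ℚ) * (stirling2 j k : ℚ) / lahNumber n k :=
  stmt_15_general n k j
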